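/- arXiv:2007.00623 — 6 statements merged into one kernel-verified Lean document; each statement's English description precedes it below -/
import Mathlib

section
/- Under momentum conservation, the ℓ²-deformed one-loop scattering equations satisfy the three SL(2)/Möbius identities: E₊ + E₋ + Σ_{i=1}^{n} E_i = 0, σ₊E₊ + σ₋E₋ + Σ_{i=1}^{n} σ_iE_i = 0, and σ₊²E₊ + σ₋²E₋ + Σ_{i=1}^{n} σ_i²E_i = 0. In particular, all dependence on ℓ·ℓ cancels in these three sums. -/
open Finset

/-- The ℓ²-deformed coefficients of the one-loop scattering equations:
`c₁ = 2ℓ·k₁ + ℓ·ℓ`, `cₙ = 2ℓ·kₙ − ℓ·ℓ`, and `c_i = 2ℓ·k_i` otherwise. -/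
noncomputable def defCoeff {F V : Type*} [Field F] [AddCommGroup V] [Module F V]
    (B : LinearMap.BilinForm F V) {n : ℕ} (k : Fin n → V) (ℓ : V) (i : Fin n) : F :=
  2 * B ℓ (k i) + (if (i : ℕ) = 0 then B ℓ ℓ else 0)
    - (if (i : ℕ) = n - 1 then B ℓ ℓ else 0)

/-- The ℓ²-deformed one-loop scattering equation attached to the external marked point `σ i`. -/
noncomputable def scatEqExt {F V : Type*} [Field F] [AddCommGroup V] [Module F V]
    (B : LinearMap.BilinForm F V) {n : ℕ} (k : Fin n → V) (ℓ : V)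
    (σ : Fin n → F) (σp σm : F) (i : Fin n) : F :=
  (∑ j ∈ univ.filter (· ≠ i), 2 * B (k i) (k j) / (σ i - σ j))
    + defCoeff B k ℓ i * (σp - σm) / ((σ i - σp) * (σ i - σm))

/-- The ℓ²-deformed one-loop scattering equation attached to the node point `σ₊`. -/
noncomputable def scatEqPlus {F V : Type*} [Field F] [AddCommGroup V] [Module F V]
    (B : LinearMap.BilinForm F V) {n : ℕ} (k : Fin n → V) (ℓ : V)
    (σ : Fin n → F) (σp : F) : F :=
  ∑ j, defCoeff B k ℓ j / (σp - σ j)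

/-- The ℓ²-deformed one-loop scattering equation attached to the node point `σ₋`. -/
noncomputable def scatEqMinus {F V : Type*} [Field F] [AddCommGroup V] [Module F V]
    (B : LinearMap.BilinForm F V) {n : ℕ} (k : Fin n → V) (ℓ : V)
    (σ : Fin n → F) (σm : F) : F :=
  - ∑ j, defCoeff B k ℓ j / (σm - σ j)

private lemma sum_filter_swap' {F : Type*} [AddCommMonoid F] {n : ℕ} (f : Fin n → Fin n → F) :
    ∑ i, ∑ j ∈ univ.filter (· ≠ i), f i j
      = ∑ i, ∑ j ∈ univ.filter (· ≠ i), f j i := by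
  rw [Finset.sum_comm' (s := univ) (t := fun i => univ.filter (· ≠ i))
    (t' := univ) (s' := fun j => univ.filter (· ≠ j))]
  intro x y
  simp [ne_comm, eq_comm]

/-- Under momentum conservation, the ℓ²-deformed one-loop scattering equations satisfy the
three SL(2)/Möbius identities `∑ σ_a^m E_a = 0` for `m = 0, 1, 2`. -/
theorem ell2_deformed_scattering_equations_moebius_identities
    {F V : Type*} [Field F] [CharZero F] [AddCommGroup V] [Module F V]
    (B : LinearMap.BilinForm F V) (hsymm : ∀ u v : V, B u v = B v u)
    {n : ℕ} (hn : 2 ≤ n) (k : Fin n → V) (ℓ : V) (σ : Fin n → F) (σp σm : F)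
    (hinj : Function.Injective σ)
    (hp : ∀ i, σ i ≠ σp) (hm : ∀ i, σ i ≠ σm) (hpm : σp ≠ σm)
    (hmomk : ∀ i : Fin n, ∑ j ∈ univ.filter (· ≠ i), 2 * B (k i) (k j) = 0)
    (hmoml : ∑ j : Fin n, 2 * B ℓ (k j) = 0) :
    scatEqPlus B k ℓ σ σp + scatEqMinus B k ℓ σ σm
        + ∑ i, scatEqExt B k ℓ σ σp σm i = 0
    ∧ σp * scatEqPlus B k ℓ σ σp + σm * scatEqMinus B k ℓ σ σm
        + ∑ i, σ i * scatEqExt B k ℓ σ σp σm i = 0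
    ∧ σp ^ 2 * scatEqPlus B k ℓ σ σp + σm ^ 2 * scatEqMinus B k ℓ σ σm
        + ∑ i, σ i ^ 2 * scatEqExt B k ℓ σ σp σm i = 0 := by
  have hds : ∀ i j : Fin n, j ≠ i → σ i - σ j ≠ 0 := fun i j h =>
    sub_ne_zero.mpr (fun he => h (hinj he).symm)
  have hds' : ∀ i j : Fin n, j ≠ i → σ j - σ i ≠ 0 := fun i j h =>
    sub_ne_zero.mpr (fun he => h (hinj he))
  have hdp : ∀ i, σ i - σp ≠ 0 := fun i => sub_ne_zero.mpr (hp i)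
  have hdm : ∀ i, σ i - σm ≠ 0 := fun i => sub_ne_zero.mpr (hm i)
  have hdp' : ∀ i, σp - σ i ≠ 0 := fun i => sub_ne_zero.mpr (Ne.symm (hp i))
  have hdm' : ∀ i, σm - σ i ≠ 0 := fun i => sub_ne_zero.mpr (Ne.symm (hm i))
  -- the sum of all deformed coefficients vanishes
  have h0 : ∑ i : Fin n, (if (i : ℕ) = 0 then B ℓ ℓ else 0) = B ℓ ℓ := by
    rw [Finset.sum_eq_single (⟨0, by omega⟩ : Fin n)]
    · simp
    · intro b _ hb
      rw [if_neg (fun h => hb (Fin.ext h))]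
    · simp
  have h1 : ∑ i : Fin n, (if (i : ℕ) = n - 1 then B ℓ ℓ else 0) = B ℓ ℓ := by
    rw [Finset.sum_eq_single (⟨n - 1, by omega⟩ : Fin n)]
    · simp
    · intro b _ hb
      rw [if_neg (fun h => hb (Fin.ext h))]
    · simp
  have hsumc : ∑ i, defCoeff B k ℓ i = 0 := by
    simp only [defCoeff]
    rw [Finset.sum_sub_distrib, Finset.sum_add_distrib, h0, h1, hmoml]
    ring
  -- T0
  have T0 : ∑ i, ∑ j ∈ univ.filter (· ≠ i), 2 * B (k i) (k j) / (σ i - σ j) = 0 := by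
    have h2 : (∑ i, ∑ j ∈ univ.filter (· ≠ i), 2 * B (k i) (k j) / (σ i - σ j))
        + (∑ i, ∑ j ∈ univ.filter (· ≠ i), 2 * B (k i) (k j) / (σ i - σ j)) = 0 := by
      nth_rewrite 2 [sum_filter_swap']
      rw [← Finset.sum_add_distrib]
      refine Finset.sum_eq_zero fun i _ => ?_
      rw [← Finset.sum_add_distrib]
      refine Finset.sum_eq_zero fun j hj => ?_
      rw [mem_filter] at hj
      rw [hsymm (k j) (k i)]
      field_simp [hds i j hj.2, hds' i j hj.2]
      ring
    exact add_self_eq_zero.mp h2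
  -- T1
  have T1 : ∑ i, ∑ j ∈ univ.filter (· ≠ i), σ i * (2 * B (k i) (k j) / (σ i - σ j)) = 0 := by
    have h2 : (∑ i, ∑ j ∈ univ.filter (· ≠ i), σ i * (2 * B (k i) (k j) / (σ i - σ j)))
        + (∑ i, ∑ j ∈ univ.filter (· ≠ i), σ i * (2 * B (k i) (k j) / (σ i - σ j)))
        = ∑ i : Fin n, ∑ j ∈ univ.filter (· ≠ i), 2 * B (k i) (k j) := by
      nth_rewrite 2 [sum_filter_swap']
      rw [← Finset.sum_add_distrib]
      refine Finset.sum_congr rfl fun i _ => ?_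
      rw [← Finset.sum_add_distrib]
      refine Finset.sum_congr rfl fun j hj => ?_
      rw [mem_filter] at hj
      rw [hsymm (k j) (k i)]
      field_simp [hds i j hj.2, hds' i j hj.2]
      ring
    have h3 : ∑ i : Fin n, ∑ j ∈ univ.filter (· ≠ i), 2 * B (k i) (k j) = 0 :=
      Finset.sum_eq_zero fun i _ => hmomk i
    rw [h3] at h2
    exact add_self_eq_zero.mp h2
  -- T2
  have A : ∀ i : Fin n, ∑ j ∈ univ.filter (· ≠ i), 2 * B (k i) (k j) * σ i = 0 := by
    intro i; rw [← Finset.sum_mul, hmomk i, zero_mul]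
  have T2 : ∑ i, ∑ j ∈ univ.filter (· ≠ i), σ i ^ 2 * (2 * B (k i) (k j) / (σ i - σ j)) = 0 := by
    have h2 : (∑ i, ∑ j ∈ univ.filter (· ≠ i), σ i ^ 2 * (2 * B (k i) (k j) / (σ i - σ j)))
        + (∑ i, ∑ j ∈ univ.filter (· ≠ i), σ i ^ 2 * (2 * B (k i) (k j) / (σ i - σ j)))
        = ∑ i : Fin n, ∑ j ∈ univ.filter (· ≠ i), 2 * B (k i) (k j) * (σ i + σ j) := by
      nth_rewrite 2 [sum_filter_swap']
      rw [← Finset.sum_add_distrib]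
      refine Finset.sum_congr rfl fun i _ => ?_
      rw [← Finset.sum_add_distrib]
      refine Finset.sum_congr rfl fun j hj => ?_
      rw [mem_filter] at hj
      rw [hsymm (k j) (k i)]
      field_simp [hds i j hj.2, hds' i j hj.2]
      ring
    have hB : ∑ i : Fin n, ∑ j ∈ univ.filter (· ≠ i), 2 * B (k i) (k j) * σ j = 0 := by
      rw [sum_filter_swap']
      calc (∑ i : Fin n, ∑ j ∈ univ.filter (· ≠ i), 2 * B (k j) (k i) * σ i)
          = ∑ i : Fin n, ∑ j ∈ univ.filter (· ≠ i), 2 * B (k i) (k j) * σ i :=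
            Finset.sum_congr rfl fun i _ => Finset.sum_congr rfl fun j _ => by rw [hsymm]
        _ = 0 := Finset.sum_eq_zero fun i _ => A i
    have h3 : ∑ i : Fin n, ∑ j ∈ univ.filter (· ≠ i), 2 * B (k i) (k j) * (σ i + σ j) = 0 := by
      simp only [mul_add, Finset.sum_add_distrib]
      rw [hB, add_zero]
      exact Finset.sum_eq_zero fun i _ => A i
    rw [h3] at h2
    exact add_self_eq_zero.mp h2
  refine ⟨?_, ?_, ?_⟩
  · simp only [scatEqPlus, scatEqMinus, scatEqExt]
    rw [Finset.sum_add_distrib, T0, zero_add, ← Finset.sum_neg_distrib,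
      ← Finset.sum_add_distrib, ← Finset.sum_add_distrib]
    refine Finset.sum_eq_zero fun i _ => ?_
    field_simp [hdp i, hdm i, hdp' i, hdm' i]
    ring
  · simp only [scatEqPlus, scatEqMinus, scatEqExt, Finset.mul_sum, mul_neg, mul_add]
    rw [Finset.sum_add_distrib, T1, zero_add, ← Finset.sum_neg_distrib,
      ← Finset.sum_add_distrib, ← Finset.sum_add_distrib]
    refine Finset.sum_eq_zero fun i _ => ?_
    field_simp [hdp i, hdm i, hdp' i, hdm' i]
    ring
  · simp only [scatEqPlus, scatEqMinus, scatEqExt, Finset.mul_sum, mul_neg, mul_add]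
    rw [Finset.sum_add_distrib, T2, zero_add, ← Finset.sum_neg_distrib,
      ← Finset.sum_add_distrib, ← Finset.sum_add_distrib]
    have hstep : ∑ i : Fin n,
        (σp ^ 2 * (defCoeff B k ℓ i / (σp - σ i))
          + -(σm ^ 2 * (defCoeff B k ℓ i / (σm - σ i)))
          + σ i ^ 2 * (defCoeff B k ℓ i * (σp - σm) / ((σ i - σp) * (σ i - σm))))
        = ∑ i, defCoeff B k ℓ i * (σp - σm) := by
      refine Finset.sum_congr rfl fun i _ => ?_
      field_simp [hdp i, hdm i, hdp' i, hdm' i]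
      ring
    rw [hstep, ← Finset.sum_mul, hsumc, zero_mul]
end

section
/- The momentum-twistor BCFW shift corresponds to a momentum-space BCFW shift of the region momentum: with the shifted twistor components λ̂ₙ := λₙ + w·λ_{n−1} and μ̂ₙ := μₙ + w·μ_{n−1}, and the region-momentum matrices x₁ := (μₙ⊗λ₁ − μ₁⊗λₙ)/⟨λₙ λ₁⟩ and x̂₁ := (μ̂ₙ⊗λ₁ − μ₁⊗λ̂ₙ)/⟨λ̂ₙ λ₁⟩, one has exactly x̂₁ = x₁ − z·(λ̃ₙ ⊗ λ₁), where z := w·⟨λ_{n−1} λₙ⟩/(w·⟨λ_{n−1} λ₁⟩ + ⟨λₙ λ₁⟩) and λ̃ₙ := (⟨λ_{n−1} λ₁⟩·μₙ + ⟨λ₁ λₙ⟩·μ_{n−1} + ⟨λₙ λ_{n−1}⟩·μ₁)/(⟨λ_{n−1} λₙ⟩·⟨λₙ λ₁⟩). In particular the shift of x₁ is the rank-one bispinor z·λ₁λ̃ₙ. -/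
/-!
By the Schouten identity, `λ_{n−1}` expands in the basis `λₙ, λ₁`, so
`λ̂ₙ = (⟨λ̂ₙ λ₁⟩/⟨λₙ λ₁⟩)·λₙ + c·λ₁`. The `μ₁ ⊗ λₙ` terms of `x̂₁` and `x₁` then agree, and
`x̂₁ − x₁` is a bispinor `(…) ⊗ λ₁`; comparing coefficients of `μₙ, μ_{n−1}, μ₁` finishes the
proof, the factor `⟨λ_{n−1} λₙ⟩` of `z` cancelling against the one in `λ̃ₙ`.
-/

/-- The antisymmetric two-component spinor bracket `⟨u v⟩ = u₀v₁ − u₁v₀`. -/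
def br2 (u v : Fin 2 → ℂ) : ℂ := u 0 * v 1 - u 1 * v 0

/-- The rank-one bispinor (outer product) `(u⊗v)(a,b) = u(a)·v(b)`. -/
def tens (u v : Fin 2 → ℂ) : Matrix (Fin 2) (Fin 2) ℂ := Matrix.of fun a b => u a * v b

open Matrix

theorem br2_swap (u v : Fin 2 → ℂ) : br2 u v = -br2 v u := by
  unfold br2; ring

theorem br2_add_smul_left (u v t : Fin 2 → ℂ) (w : ℂ) :
    br2 (u + w • v) t = w * br2 v t + br2 u t := by
  simp only [br2, Pi.add_apply, Pi.smul_apply, smul_eq_mul]; ring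

theorem br2_schouten (u v t : Fin 2 → ℂ) : br2 u t • v = br2 v t • u + br2 u v • t := by
  ext i
  fin_cases i <;>
    · simp only [br2, Fin.zero_eta, Fin.mk_one, Pi.smul_apply, smul_eq_mul, Pi.add_apply]
      ring

theorem add_smul_eq_of_br2_ne_zero {u v t : Fin 2 → ℂ} (w : ℂ) (h : br2 u t ≠ 0) :
    u + w • v = ((w * br2 v t + br2 u t) / br2 u t) • u + (w * br2 u v / br2 u t) • t := by
  refine smul_right_injective _ h ?_
  beta_reduce
  rw [smul_add, smul_add, smul_comm (br2 u t) w v, br2_schouten u v t]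
  match_scalars <;> field_simp
  ring

theorem tens_eq_vecMulVec (u v : Fin 2 → ℂ) : tens u v = vecMulVec u v := rfl

/-- The momentum-twistor BCFW shift `Ẑₙ = Zₙ + w·Z_{n−1}` corresponds to the momentum-space
shift `x̂₁ = x₁ − z·(λ̃ₙ ⊗ λ₁)` of the region momentum, with
`z = w⟨λ_{n−1}λₙ⟩/(w⟨λ_{n−1}λ₁⟩ + ⟨λₙλ₁⟩)` and
`λ̃ₙ = (⟨λ_{n−1}λ₁⟩μₙ + ⟨λ₁λₙ⟩μ_{n−1} + ⟨λₙλ_{n−1}⟩μ₁)/(⟨λ_{n−1}λₙ⟩⟨λₙλ₁⟩)`. -/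
theorem momentum_twistor_shift_is_momentum_space_BCFW_shift
    (lnm1 lN l1 mnm1 mN m1 : Fin 2 → ℂ) (w : ℂ)
    (h1 : br2 lN l1 ≠ 0) (h2 : br2 lnm1 lN ≠ 0)
    (h3 : w * br2 lnm1 l1 + br2 lN l1 ≠ 0) :
    (br2 (lN + w • lnm1) l1)⁻¹ • (tens (mN + w • mnm1) l1 - tens m1 (lN + w • lnm1)) =
      (br2 lN l1)⁻¹ • (tens mN l1 - tens m1 lN) -
        (w * br2 lnm1 lN / (w * br2 lnm1 l1 + br2 lN l1)) •
          tens ((br2 lnm1 lN * br2 lN l1)⁻¹ •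
            (br2 lnm1 l1 • mN + br2 l1 lN • mnm1 + br2 lN lnm1 • m1)) l1 := by
  rw [br2_add_smul_left, add_smul_eq_of_br2_ne_zero w h1, br2_swap l1 lN, br2_swap lN lnm1]
  simp only [tens_eq_vecMulVec, add_vecMulVec, vecMulVec_add, smul_vecMulVec, vecMulVec_smul]
  match_scalars <;> field_simp
  ring
end

section
/- Under n-point momentum conservation, Σ_{1 ≤ i < j ≤ n−2} ⟨i j⟩[i n][j n] = Σ_{2 ≤ i < j ≤ n−1} ⟨i j⟩[i n][j n]. (This is the identity showing that the two forms of the boundary term of the integrated one-loop all-plus amplitude are equivalent.) -/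
open Finset

lemma br2_contract {n : ℕ} (l lt : ℕ → Fin 2 → ℂ)
    (hcons : ∀ a b : Fin 2, ∑ i ∈ Icc 1 n, l i a * lt i b = 0)
    (u v : Fin 2 → ℂ) :
    ∑ i ∈ Icc 1 n, br2 u (l i) * br2 (lt i) v = 0 := by
  have expand : ∀ i, br2 u (l i) * br2 (lt i) v =
      (u 0 * v 1) * (l i 1 * lt i 0) - (u 0 * v 0) * (l i 1 * lt i 1)
      - (u 1 * v 1) * (l i 0 * lt i 0) + (u 1 * v 0) * (l i 0 * lt i 1) := by
    intro i; simp only [br2]; ring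
  calc ∑ i ∈ Icc 1 n, br2 u (l i) * br2 (lt i) v
      = (u 0 * v 1) * (∑ i ∈ Icc 1 n, l i 1 * lt i 0)
        - (u 0 * v 0) * (∑ i ∈ Icc 1 n, l i 1 * lt i 1)
        - (u 1 * v 1) * (∑ i ∈ Icc 1 n, l i 0 * lt i 0)
        + (u 1 * v 0) * (∑ i ∈ Icc 1 n, l i 0 * lt i 1) := by
        simp only [expand, Finset.sum_add_distrib, Finset.sum_sub_distrib, ← Finset.mul_sum]
    _ = 0 := by rw [hcons 1 0, hcons 1 1, hcons 0 0, hcons 0 1]; ring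

/-- Under `n`-point momentum conservation,
`∑_{1 ≤ i < j ≤ n−2} ⟨ij⟩[in][jn] = ∑_{2 ≤ i < j ≤ n−1} ⟨ij⟩[in][jn]`.
This shows the two forms of the boundary term of the integrated one-loop all-plus
amplitude are equivalent. -/
theorem all_plus_boundary_term_sum_identity
    {n : ℕ} (hn : 3 ≤ n) (l lt : ℕ → Fin 2 → ℂ)
    (hcons : ∀ a b : Fin 2, ∑ i ∈ Icc 1 n, l i a * lt i b = 0) :
    ∑ i ∈ Icc 1 (n - 2), ∑ j ∈ Icc (i + 1) (n - 2),
        br2 (l i) (l j) * br2 (lt i) (lt n) * br2 (lt j) (lt n)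
      = ∑ i ∈ Icc 2 (n - 1), ∑ j ∈ Icc (i + 1) (n - 1),
          br2 (l i) (l j) * br2 (lt i) (lt n) * br2 (lt j) (lt n) := by
  obtain ⟨m, rfl⟩ : ∃ m, n = m + 3 := ⟨n - 3, by omega⟩
  have hsub2 : m + 3 - 2 = m + 1 := by omega
  have hsub1 : m + 3 - 1 = m + 2 := by omega
  rw [hsub1, hsub2]
  set N := m + 3 with hN
  set f : ℕ → ℕ → ℂ := fun i j =>
    br2 (l i) (l j) * br2 (lt i) (lt N) * br2 (lt j) (lt N) with hf
  -- split off row i = 1 on the left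
  have hins : Icc 1 (m + 1) = insert 1 (Icc 2 (m + 1)) := by
    ext x; simp only [Finset.mem_Icc, Finset.mem_insert]; omega
  have hnotmem : (1 : ℕ) ∉ Icc 2 (m + 1) := by simp
  have hL : ∑ i ∈ Icc 1 (m + 1), ∑ j ∈ Icc (i + 1) (m + 1), f i j
      = (∑ j ∈ Icc 2 (m + 1), f 1 j)
        + ∑ i ∈ Icc 2 (m + 1), ∑ j ∈ Icc (i + 1) (m + 1), f i j := by
    rw [hins, Finset.sum_insert hnotmem]
  -- split off column j = m + 2 and row i = m + 2 on the right
  have hR : ∑ i ∈ Icc 2 (m + 2), ∑ j ∈ Icc (i + 1) (m + 2), f i j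
      = (∑ i ∈ Icc 2 (m + 1), ∑ j ∈ Icc (i + 1) (m + 1), f i j)
        + ∑ i ∈ Icc 2 (m + 1), f i (m + 2) := by
    rw [Finset.sum_Icc_succ_top (by omega)]
    have hempty : ∑ j ∈ Icc (m + 2 + 1) (m + 2), f (m + 2) j = 0 := by
      rw [Finset.Icc_eq_empty (by omega)]; simp
    rw [hempty, add_zero, ← Finset.sum_add_distrib]
    refine Finset.sum_congr rfl fun i hi => ?_
    rw [Finset.mem_Icc] at hi
    rw [Finset.sum_Icc_succ_top (by omega)]
  rw [hL, hR]
  -- contraction identities from momentum conservation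
  have key1 := br2_contract l lt hcons (l 1) (lt N)
  have key2 := br2_contract l lt hcons (l (m + 2)) (lt N)
  -- peel the degenerate endpoints from key1 and key2
  have peel : ∀ u : Fin 2 → ℂ,
      ∑ i ∈ Icc 1 N, br2 u (l i) * br2 (lt i) (lt N)
      = br2 u (l 1) * br2 (lt 1) (lt N)
        + (∑ i ∈ Icc 2 (m + 1), br2 u (l i) * br2 (lt i) (lt N))
        + br2 u (l (m + 2)) * br2 (lt (m + 2)) (lt N)
        + br2 u (l (m + 3)) * br2 (lt (m + 3)) (lt N) := by
    intro u
    show ∑ i ∈ Icc 1 (m + 3), _ = _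
    rw [Finset.sum_Icc_succ_top (by omega), Finset.sum_Icc_succ_top (by omega),
      hins, Finset.sum_insert hnotmem]
  have hzero : br2 (lt (m + 3)) (lt N) = 0 := by
    show br2 (lt (m + 3)) (lt (m + 3)) = 0
    simp only [br2]; ring
  have h1 : ∑ i ∈ Icc 2 (m + 1), br2 (l 1) (l i) * br2 (lt i) (lt N)
      = -(br2 (l 1) (l (m + 2)) * br2 (lt (m + 2)) (lt N)) := by
    have h := key1
    rw [peel (l 1)] at h
    have hs : br2 (l 1) (l 1) = 0 := by simp only [br2]; ring
    rw [hs, hzero] at h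
    linear_combination h
  have h2 : ∑ i ∈ Icc 2 (m + 1), br2 (l (m + 2)) (l i) * br2 (lt i) (lt N)
      = -(br2 (l (m + 2)) (l 1) * br2 (lt 1) (lt N)) := by
    have h := key2
    rw [peel (l (m + 2))] at h
    have hs : br2 (l (m + 2)) (l (m + 2)) = 0 := by simp only [br2]; ring
    rw [hs, hzero] at h
    linear_combination h
  have e1 : ∑ j ∈ Icc 2 (m + 1), f 1 j
      = br2 (lt 1) (lt N) * ∑ j ∈ Icc 2 (m + 1), br2 (l 1) (l j) * br2 (lt j) (lt N) := by
    rw [Finset.mul_sum]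
    exact Finset.sum_congr rfl fun j _ => by simp only [hf]; ring
  have e2 : ∑ i ∈ Icc 2 (m + 1), f i (m + 2)
      = -(br2 (lt (m + 2)) (lt N)
          * ∑ i ∈ Icc 2 (m + 1), br2 (l (m + 2)) (l i) * br2 (lt i) (lt N)) := by
    rw [Finset.mul_sum, ← Finset.sum_neg_distrib]
    exact Finset.sum_congr rfl fun i _ => by simp only [hf, br2]; ring
  rw [e1, e2, h1, h2]
  simp only [br2]
  ring
end

section
/- Parity-odd (γ₅) identity for the trace of six slashed vectors: under the stated hypotheses, E₆(K₁,K₂,K₃,K₄,K₅,L) = 2m·E₄(K₁,K₂,K₃,K₄) − D₀·E₄(K₅,K₂,K₃,K₄) − D₀·E₄(K₂,K₃,K₄,L+K₁) − D₁·E₄(K₃,K₄,K₅,L) − D₂·E₄(K₄,K₅,K₁,L) − D₃·E₄(K₅,K₁,K₂,L) − D₄·E₄(K₁,K₂,K₃,L). (E₄ and E₆ are the parity-odd Dirac traces Tr(γ₅ a̸b̸c̸d̸) and Tr(γ₅ k̸₁k̸₂k̸₃k̸₄k̸₅ℓ̸) in the 2-component spinor formalism, proportional to Levi-Civita contractions of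 the corresponding four-vectors; the identity holds for every value of the mass parameter m.) -/
open Matrix

/-- The parity-odd (γ₅) Dirac trace of four slashed vectors in the 2-component formalism:
`E₄(A,B,C,D) = tr(A·adj B·C·adj D) − tr(adj A·B·adj C·D)`. -/
noncomputable def E4 (A B C D : Matrix (Fin 2) (Fin 2) ℂ) : ℂ :=
  trace (A * adjugate B * C * adjugate D) - trace (adjugate A * B * adjugate C * D)

/-- The parity-odd (γ₅) Dirac trace of six slashed vectors in the 2-component formalism:
`E₆(A,B,C,D,E,F) = tr(A·adj B·C·adj D·E·adj F) − tr(adj A·B·adj C·D·adj E·F)`. -/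
noncomputable def E6 (A B C D E G : Matrix (Fin 2) (Fin 2) ℂ) : ℂ :=
  trace (A * adjugate B * C * adjugate D * E * adjugate G)
    - trace (adjugate A * B * adjugate C * D * adjugate E * G)

/-- Parity-odd identity for the trace of six slashed vectors: for massless `K₁,…,K₅` with
`K₁+⋯+K₅ = 0`, any `L` and any `m`,
`E₆(K₁,K₂,K₃,K₄,K₅,L) = 2m·E₄(K₁,K₂,K₃,K₄) − D₀·E₄(K₅,K₂,K₃,K₄) − D₀·E₄(K₂,K₃,K₄,L+K₁)
  − D₁·E₄(K₃,K₄,K₅,L) − D₂·E₄(K₄,K₅,K₁,L) − D₃·E₄(K₅,K₁,K₂,L) − D₄·E₄(K₁,K₂,K₃,L)`,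
with `D₀ = det L − m`, `Dᵢ = det(L+K₁+⋯+Kᵢ) − m`. -/
theorem trace_six_slashed_vectors_parity_odd
    (K1 K2 K3 K4 K5 L : Matrix (Fin 2) (Fin 2) ℂ) (m : ℂ)
    (h1 : K1.det = 0) (h2 : K2.det = 0) (h3 : K3.det = 0)
    (h4 : K4.det = 0) (h5 : K5.det = 0)
    (hcons : K1 + K2 + K3 + K4 + K5 = 0) :
    E6 K1 K2 K3 K4 K5 L
      = 2 * m * E4 K1 K2 K3 K4
        - (L.det - m) * E4 K5 K2 K3 K4
        - (L.det - m) * E4 K2 K3 K4 (L + K1)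
        - ((L + K1).det - m) * E4 K3 K4 K5 L
        - ((L + K1 + K2).det - m) * E4 K4 K5 K1 L
        - ((L + K1 + K2 + K3).det - m) * E4 K5 K1 K2 L
        - ((L + K1 + K2 + K3 + K4).det - m) * E4 K1 K2 K3 L := by
  have hK5 : K5 = -(K1 + K2 + K3 + K4) := by
    have h := eq_neg_of_add_eq_zero_right hcons
    simpa using h
  subst hK5
  simp only [E4, E6, Matrix.trace_fin_two, Matrix.adjugate_fin_two, Matrix.det_fin_two,
    Matrix.mul_apply, Fin.sum_univ_two, Matrix.add_apply, Matrix.neg_apply, Matrix.of_apply,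
    Matrix.cons_val', Matrix.cons_val_zero, Matrix.cons_val_one, Matrix.head_cons,
    Matrix.head_fin_const, Matrix.empty_val', Matrix.cons_val_fin_one]
  ring
end

section
/- Four-point kinematic Jacobi relation for the X-variables: under four-point momentum conservation and for any reference spinor η ∈ ℂ², (⟨η1⟩[12]⟨2η⟩)·(⟨η3⟩[34]⟨4η⟩)·⟨23⟩[32] = (⟨η2⟩[23]⟨3η⟩)·(⟨η1⟩[14]⟨4η⟩)·⟨12⟩[21]; equivalently, X_{1,2}X_{3,4}/s₁₂ = X_{2,3}X_{1,4}/s₂₃ with X_{a,b} := ⟨ηa⟩[ab]⟨bη⟩ and s_{ab} := ⟨ab⟩[ba]. (This relation makes the all-plus triangle/bubble numerator contributions consistent with colour-kinematics duality.) -/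
set_option maxRecDepth 8000 in
set_option maxHeartbeats 1000000 in
/-- Four-point kinematic Jacobi relation for the X-variables: under four-point momentum
conservation and for any reference spinor `η`,
`(⟨η1⟩[12]⟨2η⟩)(⟨η3⟩[34]⟨4η⟩)⟨23⟩[32] = (⟨η2⟩[23]⟨3η⟩)(⟨η1⟩[14]⟨4η⟩)⟨12⟩[21]`,
i.e. `X₁₂X₃₄/s₁₂ = X₂₃X₁₄/s₂₃`. -/
theorem four_point_X_jacobi_relation
    (l1 l2 l3 l4 lt1 lt2 lt3 lt4 η : Fin 2 → ℂ)
    (hcons : ∀ a b : Fin 2,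
      l1 a * lt1 b + l2 a * lt2 b + l3 a * lt3 b + l4 a * lt4 b = 0) :
    (br2 η l1 * br2 lt1 lt2 * br2 l2 η) * (br2 η l3 * br2 lt3 lt4 * br2 l4 η)
        * (br2 l2 l3 * br2 lt3 lt2)
      = (br2 η l2 * br2 lt2 lt3 * br2 l3 η) * (br2 η l1 * br2 lt1 lt4 * br2 l4 η)
        * (br2 l1 l2 * br2 lt2 lt1) := by
  have h00 := hcons 0 0
  have h01 := hcons 0 1
  have h10 := hcons 1 0
  have h11 := hcons 1 1
  have hX3 : (lt3 0 * lt4 1 - lt3 1 * lt4 0) * (l4 0 * η 1 - l4 1 * η 0)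
      + (lt3 0 * lt1 1 - lt3 1 * lt1 0) * (l1 0 * η 1 - l1 1 * η 0)
      + (lt3 0 * lt2 1 - lt3 1 * lt2 0) * (l2 0 * η 1 - l2 1 * η 0) = 0 := by
    linear_combination (lt3 0 * η 1) * h01 - (lt3 0 * η 0) * h11 - (lt3 1 * η 1) * h00
      + (lt3 1 * η 0) * h10
  have hX1 : (lt1 0 * lt4 1 - lt1 1 * lt4 0) * (l4 0 * η 1 - l4 1 * η 0)
      + (lt1 0 * lt2 1 - lt1 1 * lt2 0) * (l2 0 * η 1 - l2 1 * η 0)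
      + (lt1 0 * lt3 1 - lt1 1 * lt3 0) * (l3 0 * η 1 - l3 1 * η 0) = 0 := by
    linear_combination (lt1 0 * η 1) * h01 - (lt1 0 * η 0) * h11 - (lt1 1 * η 1) * h00
      + (lt1 1 * η 0) * h10
  have hD3 : (l1 0 * l2 1 - l1 1 * l2 0) * (lt1 0 * lt2 1 - lt1 1 * lt2 0)
      + (l1 0 * l3 1 - l1 1 * l3 0) * (lt1 0 * lt3 1 - lt1 1 * lt3 0)
      + (l2 0 * l3 1 - l2 1 * l3 0) * (lt2 0 * lt3 1 - lt2 1 * lt3 0) = 0 := by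
    linear_combination (l1 1 * lt1 1 + l2 1 * lt2 1 + l3 1 * lt3 1) * h00
      - (l4 0 * lt4 0) * h11
      - (l1 1 * lt1 0 + l2 1 * lt2 0 + l3 1 * lt3 0) * h01
      + (l4 0 * lt4 1) * h10
  simp only [br2]
  linear_combination
    ((η 0 * l1 1 - η 1 * l1 0) * (lt1 0 * lt2 1 - lt1 1 * lt2 0) * (l2 0 * η 1 - l2 1 * η 0)
      * (η 0 * l3 1 - η 1 * l3 0)
      * ((l2 0 * l3 1 - l2 1 * l3 0) * (lt3 0 * lt2 1 - lt3 1 * lt2 0))) * hX3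
    - ((η 0 * l2 1 - η 1 * l2 0) * (lt2 0 * lt3 1 - lt2 1 * lt3 0) * (l3 0 * η 1 - l3 1 * η 0)
      * (η 0 * l1 1 - η 1 * l1 0)
      * ((l1 0 * l2 1 - l1 1 * l2 0) * (lt2 0 * lt1 1 - lt2 1 * lt1 0))) * hX1
    + ((η 0 * l1 1 - η 1 * l1 0) * (lt1 0 * lt2 1 - lt1 1 * lt2 0) * (l2 0 * η 1 - l2 1 * η 0)
      * (l3 0 * η 1 - l3 1 * η 0) * (lt2 0 * lt3 1 - lt2 1 * lt3 0)
      * (l2 0 * η 1 - l2 1 * η 0)) * hD3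
end

section
/- U(1)-decoupling identity for Parke–Taylor factors: the sum over all cyclic insertions of an extra point vanishes. Precisely, for pairwise distinct elements y, b₀, b₁, …, b_m of a field (m ≥ 1), Σ_{k=0}^{m} 1/P_k = 0, where P_k is the cyclic Parke–Taylor factor of the cycle obtained from (b₀, b₁, …, b_m) by inserting y between b_k and b_{k+1} (indices mod m+1), i.e. P_k := (b₀−b₁)⋯(b_{k−1}−b_k)·(b_k−y)·(y−b_{k+1})·(b_{k+1}−b_{k+2})⋯(b_m−b₀). -/
open Finset

/-- U(1)-decoupling identity for Parke–Taylor factors: the sum over all cyclic insertions of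
an extra point `y` into the cycle `(b₀, …, b_m)` vanishes.  The `k`-th term has denominator
`P_k = (b_k − y)(y − b_{k+1}) ∏_{i ≠ k} (b_i − b_{i+1})`, indices mod `m+1`. -/
theorem u1_decoupling_parke_taylor
    {F : Type*} [Field F] {m : ℕ} (hm : 1 ≤ m)
    (y : F) (b : Fin (m + 1) → F)
    (hinj : Function.Injective b) (hy : ∀ k, b k ≠ y) :
    ∑ k : Fin (m + 1),
      (1 : F) / ((b k - y) * (y - b (k + 1)) *
        ∏ i ∈ univ.erase k, (b i - b (i + 1))) = 0 := by
  have hy' : ∀ k : Fin (m + 1), b k - y ≠ 0 := fun k => sub_ne_zero.mpr (hy k)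
  have hne : ∀ i : Fin (m + 1), b i - b (i + 1) ≠ 0 := by
    intro i
    refine sub_ne_zero.mpr fun h => ?_
    have hv : ((i : ℕ) + 1) % (m + 1) = (i : ℕ) := by
      have := congrArg Fin.val (hinj h)
      simpa [Fin.add_def, Nat.mod_eq_of_lt (show 1 < m + 1 by omega)] using this.symm
    have hlt := i.isLt
    rcases Nat.lt_or_ge ((i : ℕ) + 1) (m + 1) with h2 | h2
    · rw [Nat.mod_eq_of_lt h2] at hv; omega
    · have h3 : (i : ℕ) + 1 = m + 1 := by omega
      rw [h3, Nat.mod_self] at hv; omega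
  set P : F := ∏ i : Fin (m + 1), (b i - b (i + 1)) with hP
  have hPne : P ≠ 0 := prod_ne_zero_iff.mpr fun i _ => hne i
  have key : ∀ k : Fin (m + 1),
      (1 : F) / ((b k - y) * (y - b (k + 1)) *
        ∏ i ∈ univ.erase k, (b i - b (i + 1))) =
      (1 / (b k - y)) / P - (1 / (b (k + 1) - y)) / P := by
    intro k
    have hPk : P = (b k - b (k + 1)) * ∏ i ∈ univ.erase k, (b i - b (i + 1)) :=
      (Finset.mul_prod_erase univ _ (mem_univ k)).symm
    have hprodne : (∏ i ∈ univ.erase k, (b i - b (i + 1))) ≠ 0 :=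
      prod_ne_zero_iff.mpr fun i _ => hne i
    have hA := hy' k
    have hB := hy' (k + 1)
    have hB' : y - b (k + 1) ≠ 0 := sub_ne_zero.mpr (Ne.symm (hy (k + 1)))
    rw [div_sub_div_same, div_sub_div _ _ hA hB, div_div, hPk,
      div_eq_div_iff (mul_ne_zero (mul_ne_zero hA hB') hprodne)
        (mul_ne_zero (mul_ne_zero hA hB) (mul_ne_zero (hne k) hprodne))]
    ring
  rw [Finset.sum_congr rfl fun k _ => key k, Finset.sum_sub_distrib]
  have : ∑ k : Fin (m + 1), (1 / (b (k + 1) - y)) / P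
       = ∑ k : Fin (m + 1), (1 / (b k - y)) / P :=
    Fintype.sum_equiv (Equiv.addRight 1) _ _ (fun k => rfl)
  rw [this, sub_self]
end
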